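/- Let (R_i, t_i) be a purely inseparable tower arising from (R_0, I_0) and let j ≥ 0. Then: (1) an element x = (x_i)_{i≥0} ∈ R_j^{s♭} is a unit if and only if x_0 is a unit of R_j/I_0R_j; (2) the map R_{j+1}^{s♭} → R_j^{s♭} sending (a_i)_{i≥0} to (F_{j+i}(a_i))_{i≥0} is a ring isomorphism, whose inverse is the shift map (a_i)_{i≥0} ↦ (a_{i+1})_{i≥0}; (3) R_j^{s♭} is a reduced ring. -/

import Mathlib

set_option synthInstance.maxHeartbeats 1000000
set_option maxHeartbeats 1000000
universe u

namespace PaperTower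

variable {R : ℕ → Type u} [∀ i, CommRing (R i)]

/-- The set of `J`-torsion elements of a commutative ring. -/
def torSet {A : Type*} [CommRing A] (J : Ideal A) : Set A :=
  {x | ∀ a ∈ J, ∃ n : ℕ, 0 < n ∧ a ^ n * x = 0}

/-- Cast ring homomorphism between quotients at equal indices. -/
def qcast (I : ∀ i, Ideal (R i)) {m n : ℕ} (h : m = n) :
    (R m ⧸ I m) →+* (R n ⧸ I n) := by subst h; exact RingHom.id _

/-- The `j`-th small tilt (inverse quasi-perfection) of a tower, as a subring of the
product of the quotients, consisting of sequences compatible with the Frobenius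
projections `F`. -/
def Tilt (I : ∀ i, Ideal (R i))
    (F : ∀ i, (R (i + 1) ⧸ I (i + 1)) →+* (R i ⧸ I i)) (j : ℕ) :
    Subring (∀ i, R (j + i) ⧸ I (j + i)) where
  carrier := {a | ∀ i, F (j + i) (a (i + 1)) = a i}
  zero_mem' := by
    intro i
    show F (j + i) 0 = 0
    simp
  one_mem' := by
    intro i
    show F (j + i) 1 = 1
    simp
  add_mem' := by
    intro a b ha hb i
    show F (j + i) (a (i + 1) + b (i + 1)) = a i + b i
    rw [map_add, ha i, hb i]
  mul_mem' := by
    intro a b ha hb i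
    show F (j + i) (a (i + 1) * b (i + 1)) = a i * b i
    rw [map_mul, ha i, hb i]
  neg_mem' := by
    intro a ha i
    show F (j + i) (-(a (i + 1))) = -(a i)
    rw [map_neg, ha i]

/-- The `m`-th projection `Φ^{(j)}_m` from the `j`-th small tilt. -/
def proj (I : ∀ i, Ideal (R i))
    (F : ∀ i, (R (i + 1) ⧸ I (i + 1)) →+* (R i ⧸ I i)) (j m : ℕ) :
    Tilt I F j →+* (R (j + m) ⧸ I (j + m)) :=
  (Pi.evalRingHom _ m).comp (Tilt I F j).subtype

lemma qcast_self (I : ∀ i, Ideal (R i)) {m : ℕ} (h : m = m) (x : R m ⧸ I m) :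
    qcast I h x = x := rfl

lemma qcast_qcast (I : ∀ i, Ideal (R i)) {m n k : ℕ} (h1 : m = n) (h2 : n = k)
    (x : R m ⧸ I m) : qcast I h2 (qcast I h1 x) = qcast I (h1.trans h2) x := by
  subst h1; subst h2; rfl

lemma qcast_F (I : ∀ i, Ideal (R i)) (F : ∀ i, (R (i+1) ⧸ I (i+1)) →+* (R i ⧸ I i))
    {m n : ℕ} (h : m = n) (x : R (m+1) ⧸ I (m+1)) :
    qcast I h (F m x) = F n (qcast I (by rw [h]) x) := by subst h; rfl

/-- For a purely inseparable tower: (1) an element of the `j`-th small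
tilt is a unit iff its `0`-th component is a unit; (2) the map
`R_{j+1}^{s♭} → R_j^{s♭}`, `(a_i) ↦ (F_{j+i}(a_i))`, is a ring isomorphism whose
inverse is the shift `(a_i) ↦ (a_{i+1})`; (3) `R_j^{s♭}` is reduced. -/
theorem stmt9 (p : ℕ) (hp : p.Prime)
    (R : ℕ → Type u) [∀ i, CommRing (R i)]
    (t : ∀ i, R i →+* R (i + 1))
    (I : ∀ i, Ideal (R i))
    (hpI : (p : R 0) ∈ I 0)
    (hIsucc : ∀ i, I (i + 1) = (I i).map (t i))
    (tbar : ∀ i, (R i ⧸ I i) →+* (R (i + 1) ⧸ I (i + 1)))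
    (htbar : ∀ i (x : R i),
      tbar i (Ideal.Quotient.mk (I i) x) = Ideal.Quotient.mk (I (i + 1)) (t i x))
    (htbarInj : ∀ i, Function.Injective (tbar i))
    (F : ∀ i, (R (i + 1) ⧸ I (i + 1)) →+* (R i ⧸ I i))
    (hF : ∀ i (x : R (i + 1) ⧸ I (i + 1)), tbar i (F i x) = x ^ p)
    (j : ℕ) :
    (∀ x : Tilt I F j, IsUnit x ↔ IsUnit (x.1 0)) ∧
    (∀ Fq : Tilt I F (j + 1) →+* Tilt I F j,
      (∀ (a : Tilt I F (j + 1)) (i : ℕ),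
        (Fq a).1 i = F (j + i) (qcast I (by omega : (j + 1) + i = (j + i) + 1) (a.1 i))) →
      Function.Bijective Fq ∧
        ∀ (a : Tilt I F j) (b : Tilt I F (j + 1)),
          Fq b = a ↔ ∀ i : ℕ,
            b.1 i = qcast I (by omega : (j + i) + 1 = (j + 1) + i) (a.1 (i + 1))) ∧
    IsReduced (Tilt I F j) := by
  have hp0 : p ≠ 0 := hp.ne_zero
  refine ⟨?_, ?_, ?_⟩
  · -- (1) units
    intro x
    have hcompat : ∀ i, F (j + i) (x.1 (i + 1)) = x.1 i := x.2
    constructor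
    · intro hx
      exact hx.map (proj I F j 0)
    · intro h0
      have hu : ∀ i, IsUnit (x.1 i) := by
        intro i
        induction i with
        | zero => exact h0
        | succ i ih =>
          have h1 : tbar (j + i) (x.1 i) = x.1 (i + 1) ^ p := by
            rw [← hcompat i, hF]
          have h2 : IsUnit (x.1 (i + 1) ^ p) := h1 ▸ ih.map (tbar (j + i))
          exact (isUnit_pow_iff hp0).mp h2
      set y : ∀ i, R (j + i) ⧸ I (j + i) := fun i => ↑(hu i).unit⁻¹ with hy
      have hxy : ∀ i, x.1 i * y i = 1 := by
        intro i
        exact (hu i).mul_val_inv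
      have hymem : y ∈ Tilt I F j := by
        intro i
        show F (j + i) (y (i + 1)) = y i
        have hinv : F (j + i) (y (i + 1)) * x.1 i = 1 := by
          calc F (j + i) (y (i + 1)) * x.1 i
              = F (j + i) (y (i + 1)) * F (j + i) (x.1 (i + 1)) := by rw [hcompat i]
            _ = F (j + i) (y (i + 1) * x.1 (i + 1)) := (map_mul _ _ _).symm
            _ = F (j + i) 1 := by rw [mul_comm, hxy]
            _ = 1 := map_one _
        calc F (j + i) (y (i + 1))
            = F (j + i) (y (i + 1)) * 1 := (mul_one _).symm
          _ = F (j + i) (y (i + 1)) * (x.1 i * y i) := by rw [hxy i]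
          _ = (F (j + i) (y (i + 1)) * x.1 i) * y i := (mul_assoc _ _ _).symm
          _ = 1 * y i := by rw [hinv]
          _ = y i := one_mul _
      exact IsUnit.of_mul_eq_one (a := x) ⟨y, hymem⟩ (Subtype.ext (funext fun i => hxy i))
  · -- (2) Fq is a bijection with explicit inverse
    intro Fq hFq
    have forward : ∀ (a : Tilt I F j) (b : Tilt I F (j + 1)), Fq b = a →
        ∀ i : ℕ, b.1 i = qcast I (by omega : (j + i) + 1 = (j + 1) + i) (a.1 (i + 1)) := by
      intro a b hb i
      have hbc : ∀ i, F ((j + 1) + i) (b.1 (i + 1)) = b.1 i := b.2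
      have pf2 : (j + 1) + (i + 1) = (j + (i + 1)) + 1 := by omega
      have pf3 : j + (i + 1) = (j + 1) + i := by omega
      have pf4 : (j + (i + 1)) + 1 = ((j + 1) + i) + 1 := by omega
      calc b.1 i = F ((j + 1) + i) (b.1 (i + 1)) := (hbc i).symm
        _ = F ((j + 1) + i) (qcast I (pf2.trans pf4) (b.1 (i + 1))) :=
            congrArg _ (qcast_self I _ _).symm
        _ = F ((j + 1) + i) (qcast I pf4 (qcast I pf2 (b.1 (i + 1)))) :=
            congrArg _ (qcast_qcast I pf2 pf4 _).symm
        _ = qcast I pf3 (F (j + (i + 1)) (qcast I pf2 (b.1 (i + 1)))) :=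
            (qcast_F I F pf3 _).symm
        _ = qcast I pf3 ((Fq b).1 (i + 1)) := by rw [hFq b (i + 1)]
        _ = qcast I pf3 (a.1 (i + 1)) := by rw [hb]
    have backward : ∀ (a : Tilt I F j) (b : Tilt I F (j + 1)),
        (∀ i : ℕ, b.1 i = qcast I (by omega : (j + i) + 1 = (j + 1) + i) (a.1 (i + 1))) →
        Fq b = a := by
      intro a b hbi
      have hac : ∀ i, F (j + i) (a.1 (i + 1)) = a.1 i := a.2
      apply Subtype.ext
      funext i
      have pf3 : (j + i) + 1 = (j + 1) + i := by omega
      have pf2 : (j + 1) + i = (j + i) + 1 := by omega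
      calc (Fq b).1 i
          = F (j + i) (qcast I pf2 (b.1 i)) := hFq b i
        _ = F (j + i) (qcast I pf2 (qcast I pf3 (a.1 (i + 1)))) := by rw [hbi i]
        _ = F (j + i) (qcast I (pf3.trans pf2) (a.1 (i + 1))) :=
            congrArg _ (qcast_qcast I pf3 pf2 _)
        _ = F (j + i) (a.1 (i + 1)) := congrArg _ (qcast_self I _ _)
        _ = a.1 i := hac i
    have hsurj : Function.Surjective Fq := by
      intro a
      have hac : ∀ i, F (j + i) (a.1 (i + 1)) = a.1 i := a.2
      refine ⟨⟨fun i => qcast I (by omega : (j + i) + 1 = (j + 1) + i) (a.1 (i + 1)), ?_⟩, ?_⟩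
      · intro i
        have pf3 : j + (i + 1) = (j + 1) + i := by omega
        have e1 : qcast I pf3 (F (j + (i + 1)) (a.1 (i + 2)))
            = qcast I pf3 (a.1 (i + 1)) := by rw [hac (i + 1)]
        have e2 : qcast I pf3 (F (j + (i + 1)) (a.1 (i + 2)))
            = F ((j + 1) + i) (qcast I (by omega) (a.1 (i + 2))) := qcast_F I F pf3 _
        exact e2.symm.trans e1
      · exact backward a _ (fun i => rfl)
    have hinj : Function.Injective Fq := by
      intro b1 b2 h12
      apply Subtype.ext
      funext i
      rw [forward (Fq b2) b1 h12 i, forward (Fq b2) b2 rfl i]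
    exact ⟨⟨hinj, hsurj⟩, fun a b => ⟨forward a b, backward a b⟩⟩
  · -- (3) reduced
    constructor
    intro x hx
    obtain ⟨n, hn⟩ := hx
    have hcompat : ∀ i, F (j + i) (x.1 (i + 1)) = x.1 i := x.2
    have hpow : ∀ k i : ℕ, (x.1 i) ^ k = (x ^ k).1 i := by
      intro k
      induction k with
      | zero => intro i; rfl
      | succ k ih => intro i; rw [pow_succ, pow_succ, ih i]; rfl
    have key : ∀ m i : ℕ, x.1 (i + m) ^ (p ^ m) = 0 → x.1 i = 0 := by
      intro m
      induction m with
      | zero => intro i h; simpa using h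
      | succ m ih =>
        intro i h
        apply ih i
        apply htbarInj (j + (i + m))
        rw [map_zero, map_pow]
        have h1 : tbar (j + (i + m)) (x.1 (i + m)) = x.1 (i + m + 1) ^ p := by
          rw [← hcompat (i + m), hF]
        rw [h1, ← pow_mul, ← pow_succ']
        exact h
      -- note: i + (m+1) = (i + m) + 1 definitionally
    apply Subtype.ext
    funext i
    show x.1 i = 0
    apply key (n + 1) i
    have hxn : x.1 (i + (n + 1)) ^ (n + 1) = 0 := by
      rw [hpow]
      have : x ^ (n + 1) = 0 := by rw [pow_succ, hn, zero_mul]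
      rw [this]; rfl
    have hle : n + 1 ≤ p ^ (n + 1) := (Nat.lt_pow_self (n := n + 1) hp.one_lt).le
    obtain ⟨k, hk⟩ : ∃ k, p ^ (n + 1) = (n + 1) + k := ⟨p ^ (n + 1) - (n + 1), by omega⟩
    rw [hk, pow_add, hxn, zero_mul]


end PaperTower
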